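/- arXiv:0901.3318 — 9 statements merged into one kernel-verified Lean document; each statement's English description precedes it below -/
import Mathlib

section
/- Let v ∈ ℝ^n \ {0}, a₀ ∈ ℝ^n, and let (γ_k) be a sequence of strictly positive real numbers with γ_k → ∞; set a_k = a₀ + γ_k v. Then the limit lim_{k→∞} r(−a_k)/γ_k exists and equals sup_{Q ∈ 𝓜} ∫ (v·B) dQ (a finite real number). -/
open MeasureTheory Filter Topology

/-!
For each `Q ∈ 𝓜` the quantity inside the supremum defining `r(-(a₀ + t v))` is affine in `t`,
`c_Q + t d_Q` with `c_Q = E_Q[a₀·B] - α(Q)` and `d_Q = E_Q[v·B]`; boundedness of `B` and `α ≥ 0`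
bound `c_Q` above uniformly. Dividing by `t`, the upper bound `c_Q ≤ K` gives
`r/t ≤ K/t + sup d`, while a single `Q` with `d_Q` close to `sup d` gives `r/t ≥ c_Q/t + d_Q`.
-/

section AffineSupremum

variable {ι : Type*} {s : Set ι} {c d : ι → ℝ} {K : ℝ}

lemma mem_upperBounds_image_add_mul (hc : ∀ i ∈ s, c i ≤ K) (hd : BddAbove (d '' s))
    {t : ℝ} (ht : 0 ≤ t) :
    K + t * sSup (d '' s) ∈ upperBounds ((fun i => c i + t * d i) '' s) := by
  rintro _ ⟨i, hi, rfl⟩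
  exact add_le_add (hc i hi) (mul_le_mul_of_nonneg_left (le_csSup hd ⟨i, hi, rfl⟩) ht)

theorem tendsto_sSup_image_add_mul_div_atTop (hs : s.Nonempty) (hc : ∀ i ∈ s, c i ≤ K)
    (hd : BddAbove (d '' s)) :
    Tendsto (fun t => sSup ((fun i => c i + t * d i) '' s) / t) atTop
      (𝓝 (sSup (d '' s))) := by
  rw [tendsto_order]
  constructor
  · intro b hb
    obtain ⟨_, ⟨i, hi, rfl⟩, hbi⟩ := exists_lt_of_lt_csSup (hs.image d) hb
    have hlim : Tendsto (fun t => c i / t + d i) atTop (𝓝 (d i)) := by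
      simpa using (tendsto_const_nhds.div_atTop tendsto_id).add_const (d i)
    filter_upwards [hlim.eventually (lt_mem_nhds hbi), eventually_gt_atTop 0] with t hbt ht
    calc b < c i / t + d i := hbt
      _ = (c i + t * d i) / t := by field_simp
      _ ≤ _ := by
        gcongr
        exact le_csSup ⟨_, mem_upperBounds_image_add_mul hc hd ht.le⟩ ⟨i, hi, rfl⟩
  · intro b hb
    have hlim : Tendsto (fun t => K / t + sSup (d '' s)) atTop (𝓝 (sSup (d '' s))) := by
      simpa using (tendsto_const_nhds.div_atTop tendsto_id).add_const (sSup (d '' s))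
    filter_upwards [hlim.eventually (gt_mem_nhds hb), eventually_gt_atTop 0] with t hbt ht
    calc sSup ((fun i => c i + t * d i) '' s) / t ≤ (K + t * sSup (d '' s)) / t := by
          gcongr
          exact csSup_le (hs.image _) (mem_upperBounds_image_add_mul hc hd ht.le)
      _ = K / t + sSup (d '' s) := by field_simp
      _ < b := hbt

end AffineSupremum

section BoundedClaims

variable {Ω ι : Type*} [MeasurableSpace Ω] [Fintype ι] {B : ι → Ω → ℝ} {C : ℝ}
  {Q : Measure Ω}

lemma sum_mul_le_sum_abs_mul (a m : ι → ℝ) (hm : ∀ j, |m j| ≤ C) :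
    ∑ j, a j * m j ≤ ∑ j, |a j| * C :=
  Finset.sum_le_sum fun j _ => (le_abs_self _).trans <| by
    rw [abs_mul]; exact mul_le_mul_of_nonneg_left (hm j) (abs_nonneg _)

variable [IsProbabilityMeasure Q]

lemma abs_integral_le_of_abs_le {f : Ω → ℝ} (hf : ∀ ω, |f ω| ≤ C) : |∫ ω, f ω ∂Q| ≤ C := by
  simpa using norm_integral_le_of_norm_le_const (μ := Q) (f := f) (Eventually.of_forall hf)

lemma integral_sum_mul (hBmeas : ∀ j, Measurable (B j)) (hBbdd : ∀ j ω, |B j ω| ≤ C)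
    (a : ι → ℝ) : ∫ ω, ∑ j, a j * B j ω ∂Q = ∑ j, a j * ∫ ω, B j ω ∂Q := by
  have hint j : Integrable (B j) Q :=
    .of_bound (hBmeas j).aestronglyMeasurable C (Eventually.of_forall (hBbdd j))
  rw [integral_finsetSum _ fun j _ => (hint j).const_mul (a j)]
  simp only [integral_const_mul]

end BoundedClaims

theorem stmt0_general
    {Ω : Type*} [MeasurableSpace Ω]
    {n : ℕ} (B : Fin n → Ω → ℝ)
    (hBmeas : ∀ j, Measurable (B j))
    (C : ℝ) (hBbdd : ∀ j ω, |B j ω| ≤ C)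
    (M : Set (Measure Ω)) (hMne : M.Nonempty)
    (hMprob : ∀ Q ∈ M, IsProbabilityMeasure Q)
    (α : Measure Ω → ℝ) (hα : ∀ Q ∈ M, 0 ≤ α Q)
    (r : (Fin n → ℝ) → ℝ)
    (hr : ∀ a : Fin n → ℝ,
      r a = sSup {x | ∃ Q ∈ M, x = ∫ ω, -(∑ j, a j * B j ω) ∂Q - α Q})
    (v : Fin n → ℝ) (a₀ : Fin n → ℝ)
    (γ : ℕ → ℝ) (hγ : Tendsto γ atTop atTop) :
    Tendsto (fun k => r (-(a₀ + γ k • v)) / γ k) atTop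
      (𝓝 (sSup {x | ∃ Q ∈ M, x = ∫ ω, (∑ j, v j * B j ω) ∂Q})) := by
  set m : Measure Ω → Fin n → ℝ := fun Q j => ∫ ω, B j ω ∂Q
  have hm : ∀ Q ∈ M, ∀ j, |m Q j| ≤ C := fun Q hQ j =>
    haveI := hMprob Q hQ; abs_integral_le_of_abs_le (hBbdd j)
  have hpair : ∀ Q ∈ M, ∀ a : Fin n → ℝ, ∫ ω, ∑ j, a j * B j ω ∂Q = ∑ j, a j * m Q j := fun Q hQ a =>
    haveI := hMprob Q hQ; integral_sum_mul hBmeas hBbdd a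
  have hset (g : Measure Ω → ℝ) : {x | ∃ Q ∈ M, x = g Q} = g '' M := by
    ext; simp [eq_comm]
  have hr_affine (t : ℝ) : r (-(a₀ + t • v)) =
      sSup ((fun Q => (∑ j, a₀ j * m Q j - α Q) + t * ∑ j, v j * m Q j) '' M) := by
    rw [hr, hset]
    refine congrArg sSup (Set.image_congr fun Q hQ => ?_)
    rw [integral_neg, hpair Q hQ]
    simp only [Pi.neg_apply, Pi.add_apply, Pi.smul_apply, smul_eq_mul, Finset.mul_sum]
    simp only [neg_mul, add_mul, Finset.sum_neg_distrib, Finset.sum_add_distrib, mul_assoc]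
    ring
  have hc : ∀ Q ∈ M, ∑ j, a₀ j * m Q j - α Q ≤ ∑ j, |a₀ j| * C := fun Q hQ => by
    linarith [sum_mul_le_sum_abs_mul a₀ _ (hm Q hQ), hα Q hQ]
  have hd : BddAbove ((fun Q => ∑ j, v j * m Q j) '' M) :=
    ⟨_, by rintro _ ⟨Q, hQ, rfl⟩; exact sum_mul_le_sum_abs_mul v _ (hm Q hQ)⟩
  rw [hset, Set.image_congr fun Q hQ => hpair Q hQ v]
  simp only [hr_affine]
  exact (tendsto_sSup_image_add_mul_div_atTop hMne hc hd).comp hγ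

/-- For `a_k = a₀ + γ_k v` with `γ_k → ∞`, `γ_k > 0` and `v ≠ 0`,
the limit `lim_k r(−a_k)/γ_k` exists and equals `sup_{Q ∈ 𝓜} ∫ (v·B) dQ`. -/
theorem stmt0
    {Ω : Type*} [MeasurableSpace Ω] (P : Measure Ω) [IsProbabilityMeasure P]
    {n : ℕ} (B : Fin n → Ω → ℝ)
    (hBmeas : ∀ j, Measurable (B j))
    (C : ℝ) (hBbdd : ∀ j ω, |B j ω| ≤ C)
    (M : Set (Measure Ω)) (hMne : M.Nonempty)
    (hMprob : ∀ Q ∈ M, IsProbabilityMeasure Q)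
    (hMac : ∀ Q ∈ M, Q ≪ P)
    (α : Measure Ω → ℝ) (hα : ∀ Q ∈ M, 0 ≤ α Q)
    (r : (Fin n → ℝ) → ℝ)
    (hr : ∀ a : Fin n → ℝ,
      r a = sSup {x | ∃ Q ∈ M, x = ∫ ω, -(∑ j, a j * B j ω) ∂Q - α Q})
    (v : Fin n → ℝ) (hv : v ≠ 0) (a₀ : Fin n → ℝ)
    (γ : ℕ → ℝ) (hγpos : ∀ k, 0 < γ k) (hγ : Tendsto γ atTop atTop) :
    Tendsto (fun k => r (-(a₀ + γ k • v)) / γ k) atTop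
      (𝓝 (sSup {x | ∃ Q ∈ M, x = ∫ ω, (∑ j, v j * B j ω) ∂Q})) :=
  stmt0_general B hBmeas C hBbdd M hMne hMprob α hα r hr v a₀ γ hγ
end

section
/- Let v ∈ ℝ^n \ {0}, a₀ ∈ ℝ^n, and let (γ_k) be a sequence of strictly positive real numbers with γ_k → ∞; set a_k = a₀ + γ_k v. If (Q_k) is any sequence in 𝓜 such that Q_k attains the supremum at −a_k for every k, then lim_{k→∞} ∫ (v·B) dQ_k = sup_{Q ∈ 𝓜} ∫ (v·B) dQ. -/
/-!
If `x i` maximizes `h + γ i * f` over `M`, comparing with any `y ∈ M` gives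
`f (x i) ≥ f y - (sup_M h - h y) / γ i`, so as `γ i → ∞` the values `f (x i)` approach
`sup_M f` from below. For the claim, `f Q = ∫ v·B dQ` and `h Q = ∫ a₀·B dQ - α Q`: the
objective at `-(a₀ + γ v)` is `h + γ f`, and boundedness of `B` and `α ≥ 0` make both
bounded above on `𝓜`.
-/

open MeasureTheory Filter Topology Set

theorem setOf_exists_mem_eq {X Y : Type*} (M : Set X) (G : X → Y) :
    {x | ∃ y ∈ M, x = G y} = G '' M := by
  ext
  simp [eq_comm]

theorem BddAbove.image_add_mul {X : Type*} {M : Set X} {f h : X → ℝ} {K : ℝ}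
    (hh : BddAbove (h '' M)) (hf : ∀ y ∈ M, |f y| ≤ K) (t : ℝ) :
    BddAbove ((fun y => h y + t * f y) '' M) := by
  obtain ⟨H, hH⟩ := hh
  refine ⟨H + |t| * K, forall_mem_image.2 fun y hy => add_le_add (hH (mem_image_of_mem h hy)) ?_⟩
  calc t * f y ≤ |t| * |f y| := (le_abs_self _).trans (abs_mul _ _).le
    _ ≤ |t| * K := by gcongr; exact hf y hy

theorem tendsto_sSup_image_of_isMaxOn_add_mul {X ι : Type*} {l : Filter ι} {M : Set X}
    {f h : X → ℝ} (hM : M.Nonempty) (hf : BddAbove (f '' M)) (hh : BddAbove (h '' M))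
    {γ : ι → ℝ} (hγ : Tendsto γ l atTop) {x : ι → X} (hxM : ∀ i, x i ∈ M)
    (hmax : ∀ i, IsMaxOn (fun y => h y + γ i * f y) M (x i)) :
    Tendsto (fun i => f (x i)) l (𝓝 (sSup (f '' M))) := by
  obtain ⟨H, hH⟩ := hh
  refine tendsto_order.2 ⟨fun a ha => ?_, fun a ha => Eventually.of_forall fun i =>
    (le_csSup hf (mem_image_of_mem f (hxM i))).trans_lt ha⟩
  obtain ⟨_, ⟨y, hyM, rfl⟩, hay⟩ := exists_lt_of_lt_csSup (hM.image f) ha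
  have hsmall : ∀ᶠ i in l, (H - h y) / γ i < f y - a :=
    (tendsto_const_nhds.div_atTop hγ).eventually (gt_mem_nhds (sub_pos.2 hay))
  filter_upwards [hγ.eventually_gt_atTop 0, hsmall] with i hγi hi
  have hcompare : h y + γ i * f y ≤ h (x i) + γ i * f (x i) := isMaxOn_iff.1 (hmax i) y hyM
  have hhx : h (x i) ≤ H := hH (mem_image_of_mem h (hxM i))
  rw [div_lt_iff₀ hγi] at hi
  nlinarith

theorem abs_sum_mul_le {ι : Type*} (s : Finset ι) (c b : ι → ℝ) {C : ℝ} (hb : ∀ j, |b j| ≤ C) :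
    |∑ j ∈ s, c j * b j| ≤ ∑ j ∈ s, |c j| * C :=
  calc |∑ j ∈ s, c j * b j| ≤ ∑ j ∈ s, |c j * b j| := Finset.abs_sum_le_sum_abs _ _
    _ ≤ ∑ j ∈ s, |c j| * C := by
      gcongr with j
      rw [abs_mul]
      exact mul_le_mul_of_nonneg_left (hb j) (abs_nonneg _)

section BoundedClaims

variable {Ω ι : Type*} [MeasurableSpace Ω] [Fintype ι] {B : ι → Ω → ℝ} {C : ℝ}

theorem integrable_sum_mul (hBmeas : ∀ j, Measurable (B j)) (hBbdd : ∀ j ω, |B j ω| ≤ C)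
    (c : ι → ℝ) (Q : Measure Ω) [IsFiniteMeasure Q] :
    Integrable (fun ω => ∑ j, c j * B j ω) Q :=
  Integrable.of_bound
    (Finset.measurable_sum _ fun j _ => (hBmeas j).const_mul _).aestronglyMeasurable
    (∑ j, |c j| * C) (ae_of_all _ fun ω => abs_sum_mul_le _ c (B · ω) (hBbdd · ω))

theorem integral_sum_add_smul_mul (hBmeas : ∀ j, Measurable (B j))
    (hBbdd : ∀ j ω, |B j ω| ≤ C) (a v : ι → ℝ) (t : ℝ) (Q : Measure Ω) [IsFiniteMeasure Q] :
    ∫ ω, ∑ j, (a + t • v) j * B j ω ∂Q =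
      ∫ ω, ∑ j, a j * B j ω ∂Q + t * ∫ ω, ∑ j, v j * B j ω ∂Q := by
  have hpt : ∀ ω, ∑ j, (a + t • v) j * B j ω = ∑ j, a j * B j ω + t * ∑ j, v j * B j ω :=
    fun ω => by
      simp only [Pi.add_apply, Pi.smul_apply, smul_eq_mul, add_mul, mul_assoc,
        Finset.sum_add_distrib, Finset.mul_sum]
  simp only [hpt]
  rw [integral_add (integrable_sum_mul hBmeas hBbdd a Q)
    ((integrable_sum_mul hBmeas hBbdd v Q).const_mul t), integral_const_mul]

theorem abs_integral_sum_mul_le (hBbdd : ∀ j ω, |B j ω| ≤ C) (c : ι → ℝ) (Q : Measure Ω)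
    [IsProbabilityMeasure Q] :
    |∫ ω, ∑ j, c j * B j ω ∂Q| ≤ ∑ j, |c j| * C := by
  simpa using norm_integral_le_of_norm_le_const (μ := Q) (f := fun ω => ∑ j, c j * B j ω)
    (ae_of_all _ fun ω => abs_sum_mul_le _ c (B · ω) (hBbdd · ω))

end BoundedClaims

theorem stmt1_general
    {Ω : Type*} [MeasurableSpace Ω]
    {n : ℕ} (B : Fin n → Ω → ℝ)
    (hBmeas : ∀ j, Measurable (B j))
    (C : ℝ) (hBbdd : ∀ j ω, |B j ω| ≤ C)
    (M : Set (Measure Ω)) (hMne : M.Nonempty)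
    (hMprob : ∀ Q ∈ M, IsProbabilityMeasure Q)
    (α : Measure Ω → ℝ) (hα : ∀ Q ∈ M, 0 ≤ α Q)
    (r : (Fin n → ℝ) → ℝ)
    (hr : ∀ a : Fin n → ℝ,
      r a = sSup {x | ∃ Q ∈ M, x = ∫ ω, -(∑ j, a j * B j ω) ∂Q - α Q})
    (v : Fin n → ℝ) (a₀ : Fin n → ℝ)
    (γ : ℕ → ℝ) (hγ : Tendsto γ atTop atTop)
    (Q : ℕ → Measure Ω) (hQmem : ∀ k, Q k ∈ M)
    (hQattain : ∀ k,
      r (-(a₀ + γ k • v)) =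
        ∫ ω, -(∑ j, (-(a₀ + γ k • v)) j * B j ω) ∂(Q k) - α (Q k)) :
    Tendsto (fun k => ∫ ω, (∑ j, v j * B j ω) ∂(Q k)) atTop
      (𝓝 (sSup {x | ∃ Q' ∈ M, x = ∫ ω, (∑ j, v j * B j ω) ∂Q'})) := by
  set f : Measure Ω → ℝ := fun Q' => ∫ ω, ∑ j, v j * B j ω ∂Q'
  set h : Measure Ω → ℝ := fun Q' => ∫ ω, ∑ j, a₀ j * B j ω ∂Q' - α Q'
  have hobj : ∀ k, ∀ Q' ∈ M,
      ∫ ω, -(∑ j, (-(a₀ + γ k • v)) j * B j ω) ∂Q' - α Q' = h Q' + γ k * f Q' := by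
    intro k Q' hQ'
    have := hMprob Q' hQ'
    simp only [Pi.neg_apply, neg_mul, Finset.sum_neg_distrib, neg_neg,
      integral_sum_add_smul_mul hBmeas hBbdd, h, f]
    ring
  have hf : ∀ Q' ∈ M, |f Q'| ≤ ∑ j, |v j| * C := fun Q' hQ' =>
    have := hMprob Q' hQ'; abs_integral_sum_mul_le hBbdd v Q'
  have hh : BddAbove (h '' M) := ⟨∑ j, |a₀ j| * C, forall_mem_image.2 fun Q' hQ' => by
    have := hMprob Q' hQ'
    linarith [(abs_le.1 (abs_integral_sum_mul_le hBbdd a₀ Q')).2, hα Q' hQ']⟩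
  have hmax : ∀ k, IsMaxOn (fun Q' => h Q' + γ k * f Q') M (Q k) := fun k =>
    isMaxOn_iff.2 fun Q' hQ' => calc
      h Q' + γ k * f Q' ≤ r (-(a₀ + γ k • v)) := by
        rw [hr, setOf_exists_mem_eq, image_congr (hobj k)]
        exact le_csSup (hh.image_add_mul hf _) (mem_image_of_mem _ hQ')
      _ = h (Q k) + γ k * f (Q k) := by rw [hQattain, hobj k _ (hQmem k)]
  rw [setOf_exists_mem_eq]
  exact tendsto_sSup_image_of_isMaxOn_add_mul hMne
    ⟨_, forall_mem_image.2 fun Q' hQ' => (abs_le.1 (hf Q' hQ')).2⟩ hh hγ hQmem hmax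

/-- If `Q_k ∈ 𝓜` attains the supremum defining `r` at `−a_k`,
where `a_k = a₀ + γ_k v`, `γ_k > 0`, `γ_k → ∞` and `v ≠ 0`, then
`∫ (v·B) dQ_k → sup_{Q ∈ 𝓜} ∫ (v·B) dQ`. -/
theorem stmt1
    {Ω : Type*} [MeasurableSpace Ω] (P : Measure Ω) [IsProbabilityMeasure P]
    {n : ℕ} (B : Fin n → Ω → ℝ)
    (hBmeas : ∀ j, Measurable (B j))
    (C : ℝ) (hBbdd : ∀ j ω, |B j ω| ≤ C)
    (M : Set (Measure Ω)) (hMne : M.Nonempty)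
    (hMprob : ∀ Q ∈ M, IsProbabilityMeasure Q)
    (hMac : ∀ Q ∈ M, Q ≪ P)
    (α : Measure Ω → ℝ) (hα : ∀ Q ∈ M, 0 ≤ α Q)
    (r : (Fin n → ℝ) → ℝ)
    (hr : ∀ a : Fin n → ℝ,
      r a = sSup {x | ∃ Q ∈ M, x = ∫ ω, -(∑ j, a j * B j ω) ∂Q - α Q})
    (v : Fin n → ℝ) (hv : v ≠ 0) (a₀ : Fin n → ℝ)
    (γ : ℕ → ℝ) (hγpos : ∀ k, 0 < γ k) (hγ : Tendsto γ atTop atTop)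
    (Q : ℕ → Measure Ω) (hQmem : ∀ k, Q k ∈ M)
    (hQattain : ∀ k,
      r (-(a₀ + γ k • v)) =
        ∫ ω, -(∑ j, (-(a₀ + γ k • v)) j * B j ω) ∂(Q k) - α (Q k)) :
    Tendsto (fun k => ∫ ω, (∑ j, v j * B j ω) ∂(Q k)) atTop
      (𝓝 (sSup {x | ∃ Q' ∈ M, x = ∫ ω, (∑ j, v j * B j ω) ∂Q'})) :=
  stmt1_general B hBmeas C hBbdd M hMne hMprob α hα r hr v a₀ γ hγ Q hQmem hQattain
end

section
/- Let r : ℝ^n → ℝ be strictly convex and differentiable, and set 𝓟 = { −∇r(a) : a ∈ ℝ^n }. Then: (i) for every p ∈ 𝓟 the function a ↦ r(a) + a·p attains its minimum over ℝ^n at a unique point Z(p); and (ii) the resulting demand function Z : 𝓟 → ℝ^n is continuous on 𝓟. -/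
/-!
For `p = -∇r a`, the first-order inequality of the convex function `r` shows that `a` minimises
`r + ⟪·, p⟫`, and strict convexity makes the minimiser unique; so `Z` is the inverse of `-∇r`
on `𝓟`. For continuity at `p` with `Z p = a`: `f = r + ⟪·, p⟫` is strictly larger than `f a` on
the compact sphere of radius `ε` about `a`, hence by convexity grows at least like
`f a + c ‖x - a‖` outside it. Since `f + ⟪·, q - p⟫` is minimised at `Z q`, comparing with `a`
gives `c ‖Z q - a‖ ≤ ‖Z q - a‖ ‖q - p‖` if `‖Z q - a‖ ≥ ε`, impossible once `‖q - p‖ < c`.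
-/

open Set AffineMap
open scoped RealInnerProductSpace

theorem ConvexOn.add_le_of_hasFDerivAt {E : Type*} [NormedAddCommGroup E] [NormedSpace ℝ E]
    {f : E → ℝ} {f' : E →L[ℝ] ℝ} {a : E} (hf : ConvexOn ℝ univ f) (hf' : HasFDerivAt f f' a)
    (x : E) : f a + f' (x - a) ≤ f x := by
  have hline : ConvexOn ℝ univ (f ∘ lineMap (k := ℝ) a x) := by
    simpa using hf.comp_affineMap (lineMap (k := ℝ) a x)
  have hderiv : HasDerivAt (f ∘ lineMap (k := ℝ) a x) (f' (x - a)) 0 :=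
    (lineMap_apply_zero (k := ℝ) a x ▸ hf').comp_hasDerivAt 0 hasDerivAt_lineMap
  have := hline.le_slope_of_hasDerivAt (mem_univ 0) (mem_univ 1) one_pos hderiv
  simpa [slope, le_sub_iff_add_le'] using this

section NormedSpace

variable {E : Type*} [NormedAddCommGroup E] [NormedSpace ℝ E] {f : E → ℝ} {a : E} {ε : ℝ}

theorem ConvexOn.add_div_mul_dist_le_of_forall_sphere (hf : ConvexOn ℝ univ f) (hε : 0 < ε)
    {δ : ℝ} (hδ : ∀ y ∈ Metric.sphere a ε, f a + δ ≤ f y) {x : E} (hx : ε ≤ dist x a) :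
    f a + δ / ε * dist x a ≤ f x := by
  have hxa : 0 < dist x a := hε.trans_le hx
  set t := ε / dist x a with ht
  have ht₀ : 0 < t := div_pos hε hxa
  have ht₁ : t ≤ 1 := (div_le_one hxa).2 hx
  have hsphere : lineMap a x t ∈ Metric.sphere a ε := by
    rw [Metric.mem_sphere, dist_lineMap_left, Real.norm_of_nonneg ht₀.le, dist_comm,
      div_mul_cancel₀ _ hxa.ne']
  have hconv : f (lineMap a x t) ≤ (1 - t) * f a + t * f x := by
    simpa [lineMap_apply_module] using
      hf.2 (mem_univ a) (mem_univ x) (sub_nonneg.2 ht₁) ht₀.le (sub_add_cancel 1 t)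
  have hδt : δ ≤ t * (f x - f a) := by linarith [hδ _ hsphere]
  have : δ / ε * dist x a = δ / t := by rw [ht, div_div_eq_mul_div, div_mul_eq_mul_div]
  rw [this, ← le_sub_iff_add_le', div_le_iff₀' ht₀]
  exact hδt

theorem StrictConvexOn.exists_pos_forall_sphere [ProperSpace E] (hf : StrictConvexOn ℝ univ f)
    (hfc : Continuous f) (ha : IsMinOn f univ a) (hε : 0 < ε) :
    ∃ δ > 0, ∀ y ∈ Metric.sphere a ε, f a + δ ≤ f y := by
  have hlt : ∀ y ∈ Metric.sphere a ε, f a < f y := by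
    intro y hy
    by_contra! hle
    have hy_min : IsMinOn f univ y := fun x hx ↦ hle.trans (ha hx)
    have : y = a := hf.eq_of_isMinOn hy_min ha (mem_univ y) (mem_univ a)
    simp [this, hε.ne] at hy
  obtain ⟨m, hm, hmy⟩ := (isCompact_sphere a ε).exists_forall_le' hfc.continuousOn hlt
  exact ⟨m - f a, sub_pos.2 hm, fun y hy ↦ by linarith [hmy y hy]⟩

theorem StrictConvexOn.exists_pos_forall_add_mul_dist_le [ProperSpace E]
    (hf : StrictConvexOn ℝ univ f) (hfc : Continuous f) (ha : IsMinOn f univ a) (hε : 0 < ε) :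
    ∃ c > 0, ∀ x, ε ≤ dist x a → f a + c * dist x a ≤ f x := by
  obtain ⟨δ, hδ, hsphere⟩ := hf.exists_pos_forall_sphere hfc ha hε
  exact ⟨δ / ε, div_pos hδ hε,
    fun x hx ↦ hf.convexOn.add_div_mul_dist_le_of_forall_sphere hε hsphere hx⟩

end NormedSpace

section InnerProductSpace

variable {F : Type*} [NormedAddCommGroup F] [InnerProductSpace ℝ F]

theorem ConvexOn.isMinOn_add_inner_neg_gradient [CompleteSpace F] {r : F → ℝ} {a : F}
    (hr : ConvexOn ℝ univ r) (ha : DifferentiableAt ℝ r a) :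
    IsMinOn (fun x ↦ r x + ⟪x, -gradient r a⟫) univ a := by
  refine isMinOn_univ_iff.2 fun x ↦ ?_
  have := hr.add_le_of_hasFDerivAt (hasGradientAt_iff_hasFDerivAt.1 ha.hasGradientAt) x
  simp only [InnerProductSpace.toDual_apply_apply, inner_sub_right, inner_neg_right] at this ⊢
  linarith [real_inner_comm a (gradient r a), real_inner_comm x (gradient r a)]

theorem StrictConvexOn.add_inner {f : F → ℝ} (hf : StrictConvexOn ℝ univ f) (p : F) :
    StrictConvexOn ℝ univ (fun x ↦ f x + ⟪x, p⟫) :=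
  hf.add_convexOn (((innerₗ F).flip p).convexOn convex_univ)

theorem dist_lt_of_isMinOn_add_inner {f : F → ℝ} {a b v : F} {c ε : ℝ} (hε : 0 < ε)
    (hgrowth : ∀ x, ε ≤ dist x a → f a + c * dist x a ≤ f x)
    (hb : IsMinOn (fun x ↦ f x + ⟪x, v⟫) univ b) (hv : ‖v‖ < c) : dist b a < ε := by
  by_contra! hba
  have hcs : ⟪a - b, v⟫ ≤ dist b a * ‖v‖ := by
    rw [dist_comm, dist_eq_norm]
    exact real_inner_le_norm _ _
  have hlt : dist b a * ‖v‖ < c * dist b a := by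
    rw [mul_comm]
    exact mul_lt_mul_of_pos_right hv (hε.trans_le hba)
  rw [inner_sub_left] at hcs
  linarith [hgrowth b hba, isMinOn_univ_iff.1 hb a]

theorem StrictConvexOn.continuousOn_of_isMinOn_add_inner [ProperSpace F] {f : F → ℝ}
    (hf : StrictConvexOn ℝ univ f) (hfc : Continuous f) {Z : F → F} {S : Set F}
    (hZ : ∀ p ∈ S, IsMinOn (fun x ↦ f x + ⟪x, p⟫) univ (Z p)) : ContinuousOn Z S := by
  refine Metric.continuousOn_iff.2 fun p hp ε hε ↦ ?_
  obtain ⟨c, hc, hgrowth⟩ := (hf.add_inner p).exists_pos_forall_add_mul_dist_le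
    (hfc.add (continuous_id.inner continuous_const)) (hZ p hp) hε
  refine ⟨c, hc, fun q hq hqp ↦
    dist_lt_of_isMinOn_add_inner (f := fun x ↦ f x + ⟪x, p⟫) hε hgrowth ?_
    ((dist_eq_norm q p).symm.trans_lt hqp)⟩
  simpa only [add_assoc, ← inner_add_right, add_sub_cancel] using hZ q hq

end InnerProductSpace

/-- For a strictly convex differentiable `r : ℝⁿ → ℝ` and
`𝓟 = {−∇r(a) : a ∈ ℝⁿ}`: (i) for every `p ∈ 𝓟` the map `a ↦ r(a) + a·p` has a unique
minimizer `Z(p)`, and (ii) the demand function `Z` is continuous on `𝓟`. -/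
theorem stmt4 {n : ℕ} (r : EuclideanSpace ℝ (Fin n) → ℝ)
    (hconv : StrictConvexOn ℝ Set.univ r)
    (hdiff : Differentiable ℝ r) :
    ∃ Z : EuclideanSpace ℝ (Fin n) → EuclideanSpace ℝ (Fin n),
      (∀ p ∈ {p : EuclideanSpace ℝ (Fin n) | ∃ a, p = -gradient r a},
        (∀ a, r (Z p) + ⟪Z p, p⟫ ≤ r a + ⟪a, p⟫) ∧
        (∀ z, (∀ a, r z + ⟪z, p⟫ ≤ r a + ⟪a, p⟫) → z = Z p)) ∧
      ContinuousOn Z {p : EuclideanSpace ℝ (Fin n) | ∃ a, p = -gradient r a} := by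
  set Z := Function.invFun fun a ↦ -gradient r a
  have hZ : ∀ p ∈ {p | ∃ a, p = -gradient r a}, IsMinOn (fun x ↦ r x + ⟪x, p⟫) univ (Z p) := by
    rintro p ⟨a, rfl⟩
    have hZp : -gradient r (Z (-gradient r a)) = -gradient r a :=
      Function.invFun_eq (f := fun a ↦ -gradient r a) ⟨a, rfl⟩
    have := hconv.convexOn.isMinOn_add_inner_neg_gradient (hdiff (Z (-gradient r a)))
    rwa [hZp] at this
  refine ⟨Z, fun p hp ↦ ⟨isMinOn_univ_iff.1 (hZ p hp), fun z hz ↦ ?_⟩,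
    hconv.continuousOn_of_isMinOn_add_inner hdiff.continuous hZ⟩
  exact (hconv.add_inner p).eq_of_isMinOn (isMinOn_univ_iff.2 hz) (hZ p hp) (mem_univ z)
    (mem_univ _)
end

section
/- Let I ≥ 2 and assume: (iii) 𝓜 := ⋂_{i=1}^I 𝓜_i is nonempty; and (iv) for every δ ∈ ℝ^n \ {0}, inf_{Q ∈ 𝓜} ∫ (δ·B) dQ < sup_{Q ∈ 𝓜} ∫ (δ·B) dQ. Then the function f : (ℝ^n)^{I−1} → ℝ defined by f(a₁, …, a_{I−1}) = Σ_{i=1}^{I−1} r_i(a_i) + r_I( −Σ_{i=1}^{I−1} a_i ) is coercive: liminf_{‖(a₁,…,a_{I−1})‖ → ∞} f(a₁, …, a_{I−1}) / ‖(a₁, …, a_{I−1})‖ > 0; in particular f(a) → +∞ as ‖a‖ → ∞ and f attains its minimum over (ℝ^n)^{I−1}. -/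
/-!
Each `r i` is a supremum of affine functions `a ↦ -(a ⬝ᵥ E_Q[B]) - α i Q`, so it is Lipschitz,
and evaluating `r i` at a measure `Q i` of the common set `⋂ i, M i` bounds `f` below by a linear
function of `a` minus `∑ i, α i (Q i)`. Non-degeneracy lets one choose the `Q i` so that this
linear function is positive at any prescribed `u ≠ 0`; by compactness of the unit sphere finitely
many such choices suffice, whence `f a ≥ c * ‖a‖ - A` with `c > 0`. This growth bound gives the
positive `liminf`, the divergence of `f`, and, with continuity, the minimum.
-/

open MeasureTheory Filter Topology Set

lemma IsCompact.exists_pos_finset_forall_exists_le {X ι : Type*} [TopologicalSpace X]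
    {s : Set X} (hs : IsCompact s) {Λ : ι → X → ℝ} (hcont : ∀ i, Continuous (Λ i))
    (hpos : ∀ x ∈ s, ∃ i, 0 < Λ i x) :
    ∃ c > 0, ∃ t : Finset ι, ∀ x ∈ s, ∃ i ∈ t, c ≤ Λ i x := by
  classical
  refine hs.induction_on (p := fun s => ∃ c > 0, ∃ t : Finset ι, ∀ x ∈ s, ∃ i ∈ t, c ≤ Λ i x)
    ⟨1, one_pos, ∅, by simp⟩ ?_ ?_ ?_
  · rintro s s' hss' ⟨c, hc, t, ht⟩
    exact ⟨c, hc, t, fun x hx => ht x (hss' hx)⟩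
  · rintro s s' ⟨c, hc, t, ht⟩ ⟨c', hc', t', ht'⟩
    refine ⟨min c c', lt_min hc hc', t ∪ t', ?_⟩
    rintro x (hx | hx)
    · obtain ⟨i, hi, hle⟩ := ht x hx
      exact ⟨i, Finset.mem_union_left _ hi, (min_le_left _ _).trans hle⟩
    · obtain ⟨i, hi, hle⟩ := ht' x hx
      exact ⟨i, Finset.mem_union_right _ hi, (min_le_right _ _).trans hle⟩
  · intro x hx
    obtain ⟨i, hi⟩ := hpos x hx
    have hnhds : {y | Λ i x / 2 < Λ i y} ∈ 𝓝 x :=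
      (hcont i).continuousAt.preimage_mem_nhds (Ioi_mem_nhds (half_lt_self hi))
    exact ⟨_, mem_nhdsWithin_of_mem_nhds hnhds, Λ i x / 2, half_pos hi, {i},
      fun y hy => ⟨i, Finset.mem_singleton_self i, le_of_lt hy⟩⟩

theorem exists_pos_mul_norm_sub_le_of_forall_exists_pos {E ι : Type*} [NormedAddCommGroup E]
    [NormedSpace ℝ E] [ProperSpace E] {f : E → ℝ} {Λ : ι → E → ℝ} {A : ι → ℝ}
    (hcont : ∀ i, Continuous (Λ i)) (hsmul : ∀ i (t : ℝ) a, Λ i (t • a) = t * Λ i a)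
    (hle : ∀ i a, Λ i a - A i ≤ f a) (hpos : ∀ u ≠ 0, ∃ i, 0 < Λ i u) :
    ∃ c > 0, ∃ A₀, ∀ a ≠ 0, c * ‖a‖ - A₀ ≤ f a := by
  obtain ⟨c, hc, t, ht⟩ := (isCompact_sphere (0 : E) 1).exists_pos_finset_forall_exists_le hcont
    fun u hu => hpos u (ne_zero_of_mem_unit_sphere ⟨u, hu⟩)
  refine ⟨c, hc, ∑ i ∈ t, |A i|, fun a ha => ?_⟩
  have hna : 0 < ‖a‖ := norm_pos_iff.2 ha
  obtain ⟨i, hit, hci⟩ := ht (‖a‖⁻¹ • a) (by simp [norm_smul, hna.ne'])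
  have hΛ : c * ‖a‖ ≤ Λ i a := by
    rw [hsmul, inv_mul_eq_div, le_div_iff₀ hna] at hci
    exact hci
  have hA : A i ≤ ∑ i ∈ t, |A i| :=
    (le_abs_self _).trans (Finset.single_le_sum (fun j _ => abs_nonneg (A j)) hit)
  linarith [hle i a]

lemma eventually_mul_norm_le_of_forall_ne_zero {E : Type*} [NormedAddCommGroup E] {f : E → ℝ}
    {c A : ℝ} (hc : 0 < c) (h : ∀ a ≠ 0, c * ‖a‖ - A ≤ f a) :
    ∀ᶠ a in comap norm atTop, c / 2 * ‖a‖ ≤ f a := by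
  filter_upwards [tendsto_comap.eventually (eventually_gt_atTop (max 0 (2 * A / c)))]
    with a ha
  have hna : 0 < ‖a‖ := (le_max_left _ _).trans_lt ha
  have hA : 2 * A ≤ c * ‖a‖ := by
    rw [← div_le_iff₀' hc]
    exact (le_max_right _ _).trans ha.le
  linarith [h a (norm_pos_iff.1 hna)]

lemma zero_lt_liminf_div_norm {E : Type*} [NormedAddCommGroup E] {f : E → ℝ} {c : ℝ}
    (hc : 0 < c) (h : ∀ᶠ a in comap norm atTop, c * ‖a‖ ≤ f a) :
    (0 : EReal) < liminf (fun a => ((f a / ‖a‖ : ℝ) : EReal)) (comap norm atTop) := by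
  have hev : ∀ᶠ a in comap norm atTop, (c : EReal) ≤ ((f a / ‖a‖ : ℝ) : EReal) := by
    filter_upwards [h, tendsto_comap.eventually (eventually_gt_atTop 0)] with a ha hna
    exact EReal.coe_le_coe_iff.2 ((le_div_iff₀ hna).2 ha)
  exact (EReal.coe_pos.2 hc).trans_le (le_liminf_of_le (by isBoundedDefault) hev)

lemma lipschitzWith_ciSup_of_le_add_mul {α ι : Type*} [PseudoMetricSpace α] [Nonempty ι]
    {g : ι → α → ℝ} {L : ℝ} (hg : ∀ i x y, g i x ≤ g i y + L * dist x y)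
    (hbdd : ∀ x, BddAbove (range fun i => g i x)) :
    LipschitzWith L.toNNReal fun x => ⨆ i, g i x :=
  LipschitzWith.of_le_add_mul' L fun x y =>
    ciSup_le fun i => (hg i x y).trans (add_le_add_left (le_ciSup (hbdd y) i) _)

lemma Real.exists_lt_of_sInf_lt_sSup {s : Set ℝ} (h : sInf s < sSup s) :
    ∃ x ∈ s, ∃ y ∈ s, x < y := by
  by_contra! hs
  have hsub : s.Subsingleton := fun x hx y hy => le_antisymm (hs y hy x hx) (hs x hx y hy)
  rcases hsub.eq_empty_or_singleton with rfl | ⟨x, rfl⟩ <;> simp at h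

lemma abs_dotProduct_le {ι : Type*} [Fintype ι] (a : ι → ℝ) {v : ι → ℝ} {C : ℝ}
    (hv : ∀ j, |v j| ≤ C) : |a ⬝ᵥ v| ≤ Fintype.card ι * C * ‖a‖ := by
  calc |a ⬝ᵥ v| ≤ ∑ j, |a j| * |v j| := by
        simpa only [dotProduct, abs_mul] using
          Finset.abs_sum_le_sum_abs (fun j => a j * v j) Finset.univ
    _ ≤ ∑ _j : ι, C * ‖a‖ := Finset.sum_le_sum fun j _ => by
        rw [mul_comm C]
        exact mul_le_mul (norm_le_pi_norm a j) (hv j) (abs_nonneg _) (norm_nonneg _)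
    _ = Fintype.card ι * C * ‖a‖ := by simp [mul_assoc]

section PenalizedSup

variable {X ι : Type*} [Fintype ι]

noncomputable def penalizedSup (M : Set X) (m : X → ι → ℝ) (α : X → ℝ) (a : ι → ℝ) : ℝ :=
  ⨆ Q : M, -(a ⬝ᵥ m Q) - α Q

variable {M : Set X} {m : X → ι → ℝ} {α : X → ℝ} {C : ℝ}

lemma bddAbove_range_penalty (hm : ∀ Q ∈ M, ∀ j, |m Q j| ≤ C) (hα : ∀ Q ∈ M, 0 ≤ α Q)
    (a : ι → ℝ) : BddAbove (range fun Q : M => -(a ⬝ᵥ m Q) - α Q) := by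
  refine ⟨Fintype.card ι * C * ‖a‖, ?_⟩
  rintro _ ⟨⟨Q, hQ⟩, rfl⟩
  linarith [neg_le_abs (a ⬝ᵥ m Q), abs_dotProduct_le a (hm Q hQ), hα Q hQ]

lemma le_penalizedSup (hm : ∀ Q ∈ M, ∀ j, |m Q j| ≤ C) (hα : ∀ Q ∈ M, 0 ≤ α Q) {Q : X}
    (hQ : Q ∈ M) (a : ι → ℝ) : -(a ⬝ᵥ m Q) - α Q ≤ penalizedSup M m α a :=
  le_ciSup (bddAbove_range_penalty hm hα a) ⟨Q, hQ⟩

lemma lipschitzWith_penalizedSup (hM : M.Nonempty) (hm : ∀ Q ∈ M, ∀ j, |m Q j| ≤ C)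
    (hα : ∀ Q ∈ M, 0 ≤ α Q) :
    LipschitzWith (Fintype.card ι * C).toNNReal (penalizedSup M m α) := by
  have := hM.to_subtype
  refine lipschitzWith_ciSup_of_le_add_mul (fun Q a b => ?_) (bddAbove_range_penalty hm hα)
  have hdiff := abs_dotProduct_le (b - a) (hm Q Q.2)
  rw [sub_dotProduct, ← dist_eq_norm, dist_comm] at hdiff
  linarith [le_abs_self (b ⬝ᵥ m Q - a ⬝ᵥ m Q)]

end PenalizedSup

section LinMinorant

variable {X ι : Type*} [Fintype ι] {K : ℕ}

def linMinorant (m : X → ι → ℝ) (Q : Fin (K + 1) → X) (a : Fin K → ι → ℝ) : ℝ :=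
  ∑ i : Fin K, a i ⬝ᵥ (m (Q (Fin.last K)) - m (Q i.castSucc))

variable {m : X → ι → ℝ}

lemma continuous_linMinorant (Q : Fin (K + 1) → X) : Continuous (linMinorant m Q) := by
  unfold linMinorant dotProduct
  fun_prop

lemma linMinorant_smul (Q : Fin (K + 1) → X) (t : ℝ) (a : Fin K → ι → ℝ) :
    linMinorant m Q (t • a) = t * linMinorant m Q a := by
  simp only [linMinorant, Pi.smul_apply, smul_dotProduct, smul_eq_mul, Finset.mul_sum]

lemma linMinorant_sub_sum_le {r : Fin (K + 1) → (ι → ℝ) → ℝ} {α : Fin (K + 1) → X → ℝ}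
    {Q : Fin (K + 1) → X} (hr : ∀ i a, -(a ⬝ᵥ m (Q i)) - α i (Q i) ≤ r i a)
    (a : Fin K → ι → ℝ) :
    linMinorant m Q a - ∑ i, α i (Q i) ≤
      ∑ i : Fin K, r i.castSucc (a i) + r (Fin.last K) (-∑ i, a i) := by
  have hlast := hr (Fin.last K) (-∑ i, a i)
  have hcast := Finset.sum_le_sum fun i (_ : i ∈ Finset.univ) => hr i.castSucc (a i)
  rw [neg_dotProduct, neg_neg, sum_dotProduct] at hlast
  simp only [Finset.sum_sub_distrib, Finset.sum_neg_distrib] at hcast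
  simp only [linMinorant, dotProduct_sub, Finset.sum_sub_distrib, Fin.sum_univ_castSucc]
  linarith

lemma exists_linMinorant_pos {S : Set X}
    (hS : ∀ δ : ι → ℝ, δ ≠ 0 → ∃ Q' ∈ S, ∃ Q'' ∈ S, δ ⬝ᵥ m Q' < δ ⬝ᵥ m Q'')
    {u : Fin K → ι → ℝ} (hu : u ≠ 0) :
    ∃ Q : Fin (K + 1) → X, (∀ i, Q i ∈ S) ∧ 0 < linMinorant m Q u := by
  obtain ⟨i₀, hi₀⟩ := Function.ne_iff.1 hu
  obtain ⟨Q', hQ', Q'', hQ'', hlt⟩ := hS (u i₀) hi₀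
  refine ⟨Function.update (fun _ => Q'') i₀.castSucc Q', fun i => ?_, ?_⟩
  · rcases eq_or_ne i i₀.castSucc with rfl | hi
    · simpa using hQ'
    · simpa [hi] using hQ''
  · rw [linMinorant, Finset.sum_eq_single i₀]
    · simpa [dotProduct_sub, (Fin.castSucc_lt_last i₀).ne'] using hlt
    · intro i _ hi
      simp [(Fin.castSucc_injective K).ne hi, (Fin.castSucc_lt_last i₀).ne']
    · simp

end LinMinorant

section MeanVector

variable {Ω ι : Type*} [MeasurableSpace Ω] {B : ι → Ω → ℝ} {Q : Measure Ω}

noncomputable def meanVec (B : ι → Ω → ℝ) (Q : Measure Ω) : ι → ℝ := fun j => ∫ ω, B j ω ∂Q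

lemma integral_sum_mul_eq_dotProduct_meanVec [Fintype ι] (hB : ∀ j, Integrable (B j) Q)
    (a : ι → ℝ) :
    ∫ ω, ∑ j, a j * B j ω ∂Q = a ⬝ᵥ meanVec B Q := by
  rw [integral_finsetSum _ fun j _ => (hB j).const_mul (a j)]
  simp only [integral_const_mul, dotProduct, meanVec]

lemma abs_meanVec_le [IsProbabilityMeasure Q] {C : ℝ} (hB : ∀ j ω, |B j ω| ≤ C) (j : ι) :
    |meanVec B Q j| ≤ C := by
  simpa [meanVec] using norm_integral_le_of_norm_le_const (μ := Q)
    (.of_forall fun ω => (Real.norm_eq_abs (B j ω)).trans_le (hB j ω))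

lemma sSup_integral_penalty_eq_penalizedSup [Fintype ι] {M : Set (Measure Ω)}
    (hB : ∀ Q ∈ M, ∀ j, Integrable (B j) Q) (α : Measure Ω → ℝ) (a : ι → ℝ) :
    sSup {x | ∃ Q ∈ M, x = ∫ ω, -(∑ j, a j * B j ω) ∂Q - α Q} =
      penalizedSup M (meanVec B) α a := by
  rw [penalizedSup, ← sSup_range]
  congr 1
  ext x
  simp only [mem_ofPred_eq, mem_range, Subtype.exists, exists_prop, integral_neg]
  refine exists_congr fun Q => and_congr_right fun hQ => ?_
  rw [integral_sum_mul_eq_dotProduct_meanVec (hB Q hQ), eq_comm]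

lemma exists_dotProduct_meanVec_lt [Fintype ι] {S : Set (Measure Ω)}
    (hB : ∀ Q ∈ S, ∀ j, Integrable (B j) Q) {δ : ι → ℝ}
    (h : sInf {x | ∃ Q ∈ S, x = ∫ ω, (∑ j, δ j * B j ω) ∂Q} <
      sSup {x | ∃ Q ∈ S, x = ∫ ω, (∑ j, δ j * B j ω) ∂Q}) :
    ∃ Q' ∈ S, ∃ Q'' ∈ S, δ ⬝ᵥ meanVec B Q' < δ ⬝ᵥ meanVec B Q'' := by
  obtain ⟨_, ⟨Q', hQ', rfl⟩, _, ⟨Q'', hQ'', rfl⟩, hlt⟩ := Real.exists_lt_of_sInf_lt_sSup h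
  rw [integral_sum_mul_eq_dotProduct_meanVec (hB Q' hQ'),
    integral_sum_mul_eq_dotProduct_meanVec (hB Q'' hQ'')] at hlt
  exact ⟨Q', hQ', Q'', hQ'', hlt⟩

end MeanVector

theorem stmt6_general
    {Ω : Type*} [MeasurableSpace Ω]
    {n : ℕ} (B : Fin n → Ω → ℝ)
    (hBmeas : ∀ j, Measurable (B j))
    (C : ℝ) (hBbdd : ∀ j ω, |B j ω| ≤ C)
    {K : ℕ}
    (M : Fin (K + 1) → Set (Measure Ω))
    (hMprob : ∀ i, ∀ Q ∈ M i, IsProbabilityMeasure Q)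
    (α : Fin (K + 1) → Measure Ω → ℝ) (hα : ∀ i, ∀ Q ∈ M i, 0 ≤ α i Q)
    (r : Fin (K + 1) → (Fin n → ℝ) → ℝ)
    (hr : ∀ i (a : Fin n → ℝ),
      r i a = sSup {x | ∃ Q ∈ M i, x = ∫ ω, -(∑ j, a j * B j ω) ∂Q - α i Q})
    (hM : (⋂ i, M i).Nonempty)
    (hiv : ∀ δ : Fin n → ℝ, δ ≠ 0 →
      sInf {x | ∃ Q ∈ ⋂ i, M i, x = ∫ ω, (∑ j, δ j * B j ω) ∂Q} <
      sSup {x | ∃ Q ∈ ⋂ i, M i, x = ∫ ω, (∑ j, δ j * B j ω) ∂Q})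
    (f : (Fin K → Fin n → ℝ) → ℝ)
    (hf : ∀ a : Fin K → Fin n → ℝ,
      f a = ∑ i : Fin K, r i.castSucc (a i) + r (Fin.last K) (-(∑ i, a i))) :
    (0 : EReal) < Filter.liminf
        (fun a : Fin K → Fin n → ℝ => ((f a / ‖a‖ : ℝ) : EReal))
        (Filter.comap (fun a : Fin K → Fin n → ℝ => ‖a‖) Filter.atTop) ∧
    Tendsto f (Filter.comap (fun a : Fin K → Fin n → ℝ => ‖a‖) Filter.atTop) atTop ∧
    ∃ amin : Fin K → Fin n → ℝ, ∀ a, f amin ≤ f a := by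
  have hint : ∀ i, ∀ Q ∈ M i, ∀ j, Integrable (B j) Q := fun i Q hQ j =>
    have := hMprob i Q hQ
    .of_bound (hBmeas j).aestronglyMeasurable C (.of_forall (hBbdd j))
  have hmean : ∀ i, ∀ Q ∈ M i, ∀ j, |meanVec B Q j| ≤ C := fun i Q hQ j =>
    have := hMprob i Q hQ
    abs_meanVec_le hBbdd j
  have hr' : ∀ i, r i = penalizedSup (M i) (meanVec B) (α i) := fun i =>
    funext fun a => (hr i a).trans (sSup_integral_penalty_eq_penalizedSup (hint i) _ _)
  have hminorant (Q : Fin (K + 1) → Measure Ω) (hQ : ∀ i, Q i ∈ ⋂ i, M i) (a) :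
      linMinorant (meanVec B) Q a - ∑ i, α i (Q i) ≤ f a :=
    hf a ▸ linMinorant_sub_sum_le (fun i a => hr' i ▸
      le_penalizedSup (hmean i) (hα i) (mem_iInter.1 (hQ i) i) a) a
  have hpair (δ : Fin n → ℝ) (hδ : δ ≠ 0) :=
    exists_dotProduct_meanVec_lt (fun Q hQ => hint 0 Q (mem_iInter.1 hQ 0)) (hiv δ hδ)
  obtain ⟨c, hc, A, hA⟩ := exists_pos_mul_norm_sub_le_of_forall_exists_pos
    (Λ := fun Q : {Q : Fin (K + 1) → Measure Ω // ∀ i, Q i ∈ ⋂ i, M i} =>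
      linMinorant (meanVec B) Q.1)
    (A := fun Q => ∑ i, α i (Q.1 i)) (fun _ => continuous_linMinorant _)
    (fun _ => linMinorant_smul _)
    (fun Q => hminorant Q.1 Q.2)
    (fun u hu => let ⟨Q, hQ, hpos⟩ := exists_linMinorant_pos hpair hu; ⟨⟨Q, hQ⟩, hpos⟩)
  have hgrowth := eventually_mul_norm_le_of_forall_ne_zero hc hA
  have htend : Tendsto f (comap norm atTop) atTop :=
    tendsto_atTop_mono' _ hgrowth (tendsto_comap.const_mul_atTop (half_pos hc))
  have hcont : Continuous f := by
    have hrcont : ∀ i, Continuous (r i) := fun i => hr' i ▸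
      (lipschitzWith_penalizedSup (hM.mono (iInter_subset M i)) (hmean i) (hα i)).continuous
    rw [funext hf]
    fun_prop
  exact ⟨zero_lt_liminf_div_norm (half_pos hc) hgrowth, htend,
    hcont.exists_forall_le (htend.mono_left tendsto_norm_cocompact_atTop.le_comap)⟩

/-- With `I = K + 1 ≥ 2` agents, under the nonempty-intersection and
non-degeneracy assumptions, the function
`f(a₁,…,a_K) = Σ_{i≤K} r_i(a_i) + r_{K+1}(−Σ a_i)` is coercive:
`liminf_{‖a‖→∞} f(a)/‖a‖ > 0`; in particular `f(a) → ∞` as `‖a‖ → ∞` and `f` attains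
its minimum. -/
theorem stmt6
    {Ω : Type*} [MeasurableSpace Ω] (P : Measure Ω) [IsProbabilityMeasure P]
    {n : ℕ} (B : Fin n → Ω → ℝ)
    (hBmeas : ∀ j, Measurable (B j))
    (C : ℝ) (hBbdd : ∀ j ω, |B j ω| ≤ C)
    {K : ℕ} (hK : 1 ≤ K)
    (M : Fin (K + 1) → Set (Measure Ω)) (hMne : ∀ i, (M i).Nonempty)
    (hMprob : ∀ i, ∀ Q ∈ M i, IsProbabilityMeasure Q)
    (hMac : ∀ i, ∀ Q ∈ M i, Q ≪ P)
    (α : Fin (K + 1) → Measure Ω → ℝ) (hα : ∀ i, ∀ Q ∈ M i, 0 ≤ α i Q)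
    (r : Fin (K + 1) → (Fin n → ℝ) → ℝ)
    (hr : ∀ i (a : Fin n → ℝ),
      r i a = sSup {x | ∃ Q ∈ M i, x = ∫ ω, -(∑ j, a j * B j ω) ∂Q - α i Q})
    (hM : (⋂ i, M i).Nonempty)
    (hiv : ∀ δ : Fin n → ℝ, δ ≠ 0 →
      sInf {x | ∃ Q ∈ ⋂ i, M i, x = ∫ ω, (∑ j, δ j * B j ω) ∂Q} <
      sSup {x | ∃ Q ∈ ⋂ i, M i, x = ∫ ω, (∑ j, δ j * B j ω) ∂Q})
    (f : (Fin K → Fin n → ℝ) → ℝ)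
    (hf : ∀ a : Fin K → Fin n → ℝ,
      f a = ∑ i : Fin K, r i.castSucc (a i) + r (Fin.last K) (-(∑ i, a i))) :
    (0 : EReal) < Filter.liminf
        (fun a : Fin K → Fin n → ℝ => ((f a / ‖a‖ : ℝ) : EReal))
        (Filter.comap (fun a : Fin K → Fin n → ℝ => ‖a‖) Filter.atTop) ∧
    Tendsto f (Filter.comap (fun a : Fin K → Fin n → ℝ => ‖a‖) Filter.atTop) atTop ∧
    ∃ amin : Fin K → Fin n → ℝ, ∀ a, f amin ≤ f a :=
  stmt6_general B hBmeas C hBbdd M hMprob α hα r hr hM hiv f hf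
end

section
/- Let ρ₁, …, ρ_I : L^∞ → ℝ be convex and cash-invariant with ρ_i(0) = 0 for every i. Let B = (B₁, …, B_n) ∈ (L^∞)^n, let a₁, …, a_I ∈ ℝ^n with Σ_{i=1}^I a_i = 0, and suppose there exist price vectors p, p̂ ∈ ℝ^n such that for every i: ρ_i( a_i·B − a_i·p ) ≤ 0 and ρ_i( −a_i·B + a_i·p̂ ) ≤ 0 (i.e., both the allocation and its negative are mutually agreeable, at prices p and p̂ respectively). Then a_i·p = a_i·p̂ for every i, and ρ_i( a_i·B ) + ρ_i( −a_i·B ) ≤ 0 for every i. -/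
open MeasureTheory

/-! Convexity and `ρ_i 0 = 0` give `0 ≤ ρ_i(X) + ρ_i(-X)`, while cash invariance turns the two
agreeability conditions into `ρ_i(X) + ρ_i(-X) ≤ a_i·p̂ - a_i·p`. Hence `a_i·p ≤ a_i·p̂` for every
`i`; as the `a_i` sum to zero both sides sum to zero, which forces equality termwise and then
`ρ_i(X) + ρ_i(-X) ≤ 0`. -/

theorem ConvexOn.two_mul_apply_zero_le_add_apply_neg {E : Type*} [AddCommGroup E] [Module ℝ E]
    {f : E → ℝ} (hf : ConvexOn ℝ Set.univ f) (x : E) : 2 * f 0 ≤ f x + f (-x) := by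
  have hmid := hf.2 (Set.mem_univ x) (Set.mem_univ (-x)) (by norm_num : (0 : ℝ) ≤ 1 / 2)
    (by norm_num : (0 : ℝ) ≤ 1 / 2) (by norm_num)
  rw [smul_neg, add_neg_cancel, smul_eq_mul, smul_eq_mul] at hmid
  linarith

theorem dotProduct_eq_of_forall_le_of_sum_eq_zero {ι m : Type*} [Fintype ι] [Fintype m]
    {a : ι → m → ℝ} (hsum : ∑ i, a i = 0) {p q : m → ℝ} (hle : ∀ i, a i ⬝ᵥ p ≤ a i ⬝ᵥ q)
    (i : ι) : a i ⬝ᵥ p = a i ⬝ᵥ q := by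
  have htotal : ∑ i, a i ⬝ᵥ p = ∑ i, a i ⬝ᵥ q := by
    rw [← sum_dotProduct, ← sum_dotProduct, hsum, zero_dotProduct, zero_dotProduct]
  exact (Finset.sum_eq_sum_iff_of_le fun i _ => hle i).mp htotal i (Finset.mem_univ i)

/-- If `ρ_i` are convex and cash-invariant with `ρ_i(0) = 0`, and the
allocation `(a_i)` of the bundle `B` (with `Σ a_i = 0`) is mutually agreeable at price
`p` while its negative is mutually agreeable at price `p̂`, then `a_i·p = a_i·p̂` for
every `i` and `ρ_i(a_i·B) + ρ_i(−a_i·B) ≤ 0` for every `i`. -/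
theorem stmt11
    {Ω : Type*} [MeasurableSpace Ω] (P : Measure Ω) [IsProbabilityMeasure P]
    {I n : ℕ} (ρ : Fin I → Lp ℝ ⊤ P → ℝ)
    (hconv : ∀ i, ConvexOn ℝ Set.univ (ρ i))
    (hcash : ∀ i (X : Lp ℝ ⊤ P) (m : ℝ),
      ρ i (X + (memLp_const m).toLp (fun _ => m)) = ρ i X - m)
    (hzero : ∀ i, ρ i 0 = 0)
    (B : Fin n → Lp ℝ ⊤ P)
    (a : Fin I → Fin n → ℝ) (hsum : ∑ i, a i = (0 : Fin n → ℝ))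
    (p phat : Fin n → ℝ)
    (hp : ∀ i, ρ i (∑ j, a i j • B j +
      (memLp_const (-(∑ j, a i j * p j))).toLp (fun _ => -(∑ j, a i j * p j))) ≤ 0)
    (hphat : ∀ i, ρ i (-(∑ j, a i j • B j) +
      (memLp_const (∑ j, a i j * phat j)).toLp (fun _ => ∑ j, a i j * phat j)) ≤ 0) :
    (∀ i, ∑ j, a i j * p j = ∑ j, a i j * phat j) ∧
    (∀ i, ρ i (∑ j, a i j • B j) + ρ i (-(∑ j, a i j • B j)) ≤ 0) := by
  set X : Fin I → Lp ℝ ⊤ P := fun i => ∑ j, a i j • B j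
  have hρX : ∀ i, ρ i (X i) ≤ -(a i ⬝ᵥ p) := fun i => by
    have := hp i
    rw [hcash] at this
    exact sub_nonpos.mp this
  have hρnegX : ∀ i, ρ i (-X i) ≤ a i ⬝ᵥ phat := fun i => by
    have := hphat i
    rw [hcash] at this
    exact sub_nonpos.mp this
  have hsym : ∀ i, 0 ≤ ρ i (X i) + ρ i (-X i) := fun i => by
    simpa [hzero] using (hconv i).two_mul_apply_zero_le_add_apply_neg (X i)
  have hprice : ∀ i, a i ⬝ᵥ p = a i ⬝ᵥ phat :=
    dotProduct_eq_of_forall_le_of_sum_eq_zero hsum fun i => by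
      linarith [hρX i, hρnegX i, hsym i]
  exact ⟨hprice, fun i => by linarith [hρX i, hρnegX i, hprice i]⟩
end

section
/- Let f_m, f : ℝ^n → ℝ (m ∈ ℕ) be real-valued convex functions and suppose the sequence (f_m) converges to f in the Kuratowski (epigraphical) sense, i.e.: (a) for every x ∈ ℝ^n and every sequence x_m → x, liminf_{m→∞} f_m(x_m) ≥ f(x); and (b) for every x ∈ ℝ^n there exists a sequence x_m → x with limsup_{m→∞} f_m(x_m) ≤ f(x). Then f_m converges to f pointwise on ℝ^n. -/
/-!
The lower bound is (a) along the constant sequence. For the upper bound fix `C > g x`. By (b)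
and the continuity of the convex function `g`, every point `y` of the open set `{g < C}` is the
limit of a sequence along which `f m` is eventually `≤ C`. Such sequences can be pinned to `y`
one coordinate at a time: if `y ∓ s eₖ` have them, then on the segment joining the two sequences
there is eventually a point whose `k`-th coordinate is exactly `y k`, and convexity bounds `f m`
there by `C`. Once every coordinate is pinned the sequence is eventually equal to `x`, so
`f m x ≤ C` eventually.
-/

open Filter Topology Set

section PinnedRecovery

variable {ι : Type*} (f : ℕ → (ι → ℝ) → ℝ) (C : ℝ)

def HasPinnedRecovery (J : Finset ι) (y : ι → ℝ) : Prop :=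
  ∃ ys : ℕ → ι → ℝ, Tendsto ys atTop (𝓝 y) ∧
    (∀ᶠ m in atTop, ∀ j ∈ J, ys m j = y j) ∧ ∀ᶠ m in atTop, f m (ys m) ≤ C

variable {f C}

theorem HasPinnedRecovery.insert [DecidableEq ι] (hf : ∀ m, ConvexOn ℝ univ (f m))
    {J : Finset ι} {k : ι} (hk : k ∉ J) {y : ι → ℝ} {s : ℝ} (hs : 0 < s)
    (hl : HasPinnedRecovery f C J (y - Pi.single k s))
    (hr : HasPinnedRecovery f C J (y + Pi.single k s)) :
    HasPinnedRecovery f C (insert k J) y := by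
  obtain ⟨a, ha, haJ, haC⟩ := hl
  obtain ⟨b, hb, hbJ, hbC⟩ := hr
  have hak : Tendsto (fun m => a m k) atTop (𝓝 (y k - s)) := by
    simpa using tendsto_pi_nhds.mp ha k
  have hbk : Tendsto (fun m => b m k) atTop (𝓝 (y k + s)) := by
    simpa using tendsto_pi_nhds.mp hb k
  set t : ℕ → ℝ := fun m => (y k - a m k) / (b m k - a m k)
  have hgap : Tendsto (fun m => b m k - a m k) atTop (𝓝 (2 * s)) := by
    convert hbk.sub hak using 2; ring
  have ht : Tendsto t atTop (𝓝 (1 / 2)) := by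
    have h : (y k - (y k - s)) / (2 * s) = 1 / 2 := by field_simp; ring
    exact h ▸ ((tendsto_const_nhds (x := y k)).sub hak).div hgap (by positivity)
  have ht01 : ∀ᶠ m in atTop, 0 ≤ t m ∧ t m ≤ 1 :=
    ht.eventually (Icc_mem_nhds (by norm_num) (by norm_num))
  refine ⟨fun m => (1 - t m) • a m + t m • b m, ?_, ?_, ?_⟩
  · convert ((tendsto_const_nhds.sub ht).smul ha).add (ht.smul hb) using 2
    ext j; by_cases hj : j = k <;> simp [hj] <;> ring
  · filter_upwards [haJ, hbJ, hgap.eventually_ne (by positivity)] with m haj hbj hne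
    intro j hj
    rcases Finset.mem_insert.mp hj with rfl | hj
    · simp only [Pi.add_apply, Pi.smul_apply, smul_eq_mul, t]
      field_simp
      ring
    · have hjk : j ≠ k := fun h => hk (h ▸ hj)
      simp [haj j hj, hbj j hj, hjk]
      ring
  · filter_upwards [haC, hbC, ht01] with m ham hbm ⟨ht0, ht1⟩
    exact ((hf m).le_on_segment' (mem_univ _) (mem_univ _) (by linarith) ht0 (by ring)).trans
      (max_le ham hbm)

theorem IsOpen.hasPinnedRecovery (hf : ∀ m, ConvexOn ℝ univ (f m)) {U : Set (ι → ℝ)}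
    (hU : IsOpen U) (h : ∀ y ∈ U, HasPinnedRecovery f C ∅ y) (J : Finset ι) :
    ∀ y ∈ U, HasPinnedRecovery f C J y := by
  classical
  induction J using Finset.induction_on with
  | empty => exact h
  | insert k J hk ih =>
    intro y hy
    have hline : Tendsto (fun s : ℝ => (y - Pi.single k s, y + Pi.single k s)) (𝓝[>] 0)
        (𝓝 (y, y)) := by
      have hsingle := continuous_single (A := fun _ : ι => ℝ) k
      refine (((continuous_const.sub hsingle).prodMk (continuous_const.add hsingle)).tendsto 0
        |>.mono_left nhdsWithin_le_nhds).trans_eq ?_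
      simp
    obtain ⟨s, ⟨hl, hr⟩, hs⟩ := ((hline.eventually ((hU.prod hU).mem_nhds ⟨hy, hy⟩)).and
      self_mem_nhdsWithin).exists
    exact HasPinnedRecovery.insert hf hk hs (ih _ hl) (ih _ hr)

theorem eventually_le_of_isOpen [Fintype ι] (hf : ∀ m, ConvexOn ℝ univ (f m))
    {U : Set (ι → ℝ)} (hU : IsOpen U)
    (h : ∀ y ∈ U, ∃ ys : ℕ → ι → ℝ, Tendsto ys atTop (𝓝 y) ∧ ∀ᶠ m in atTop, f m (ys m) ≤ C)
    {x : ι → ℝ} (hx : x ∈ U) : ∀ᶠ m in atTop, f m x ≤ C := by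
  obtain ⟨xs, -, hpin, hC⟩ := hU.hasPinnedRecovery hf
    (fun y hy => (h y hy).imp fun _ ⟨hys, hyC⟩ => ⟨hys, by simp, hyC⟩) Finset.univ x hx
  filter_upwards [hpin, hC] with m hm hmC
  rwa [show xs m = x from funext fun j => hm j (Finset.mem_univ j)] at hmC

end PinnedRecovery

/-- If real-valued convex functions `f_m` converge to the convex function
`f` in the Kuratowski (epigraphical) sense — (a) `liminf f_m(x_m) ≥ f(x)` along every
sequence `x_m → x`, and (b) for each `x` there is a sequence `x_m → x` with
`limsup f_m(x_m) ≤ f(x)` — then `f_m → f` pointwise on `ℝⁿ`. -/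
theorem stmt12 {n : ℕ} (f : ℕ → (Fin n → ℝ) → ℝ) (g : (Fin n → ℝ) → ℝ)
    (hf : ∀ m, ConvexOn ℝ Set.univ (f m))
    (hg : ConvexOn ℝ Set.univ g)
    (ha : ∀ (x : Fin n → ℝ) (xs : ℕ → Fin n → ℝ), Tendsto xs atTop (𝓝 x) →
      ((g x : ℝ) : EReal) ≤ Filter.liminf (fun m => ((f m (xs m) : ℝ) : EReal)) atTop)
    (hb : ∀ x : Fin n → ℝ, ∃ xs : ℕ → Fin n → ℝ, Tendsto xs atTop (𝓝 x) ∧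
      Filter.limsup (fun m => ((f m (xs m) : ℝ) : EReal)) atTop ≤ ((g x : ℝ) : EReal)) :
    ∀ x, Tendsto (fun m => f m x) atTop (𝓝 (g x)) := by
  intro x
  refine tendsto_order.mpr ⟨fun c hc => ?_, fun c hc => ?_⟩
  · have hlim := (EReal.coe_lt_coe hc).trans_le (ha x (fun _ => x) tendsto_const_nhds)
    exact (eventually_lt_of_lt_liminf hlim).mono fun _ => EReal.coe_lt_coe_iff.mp
  · obtain ⟨C, hxC, hCc⟩ := exists_between hc
    have hU : IsOpen {y | g y < C} :=
      isOpen_lt (continuousOn_univ.mp (hg.continuousOn isOpen_univ)) continuous_const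
    have hbounded : ∀ y ∈ {y | g y < C}, ∃ ys : ℕ → Fin n → ℝ, Tendsto ys atTop (𝓝 y) ∧
        ∀ᶠ m in atTop, f m (ys m) ≤ C := by
      intro y hy
      obtain ⟨ys, hys, hsup⟩ := hb y
      exact ⟨ys, hys, (eventually_lt_of_limsup_lt (hsup.trans_lt (EReal.coe_lt_coe hy))).mono
        fun _ hm => (EReal.coe_lt_coe_iff.mp hm).le⟩
    filter_upwards [eventually_le_of_isOpen hf hU hbounded hxC] with m hm
    exact hm.trans_lt hCc
end

section
/- Let f_m, f : ℝ^k → ℝ (m ∈ ℕ) be real-valued convex functions with f_m → f pointwise on ℝ^k. Suppose f has a unique minimizer x* ∈ ℝ^k and, for each m, x_m ∈ ℝ^k is a minimizer of f_m. Then x_m → x* as m → ∞. -/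
/-!
Pointwise convergent convex functions are eventually bounded above, uniformly on each ball: the ball
lies in the convex hull of finitely many points, at which the `f m` are eventually bounded. Writing a point `z`
as `(1 - t) • y + t • w` with `w` near `z` then shows that `g z ≤ liminf f m (y m)` whenever
`y m → z`. If `x m` stays `ε` away from `x*` along a subsequence, convexity moves it onto the sphere
of radius `ε` about `x*` without raising `f m` above `f m x*`; a cluster point `z` of these points
satisfies `g z ≤ g x*` with `z ≠ x*`, contradicting uniqueness of the minimizer.
-/

open Filter Topology Metric Set

section ConvexLimits

variable {E : Type*} [NormedAddCommGroup E] [NormedSpace ℝ E]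

theorem ConvexOn.exists_mem_sphere_le_of_le {s : Set E} {F : E → ℝ} (hF : ConvexOn ℝ s F)
    {c x : E} (hc : c ∈ s) (hx : x ∈ s) (hxc : F x ≤ F c) {ε : ℝ} (hε : 0 < ε)
    (hεx : ε ≤ dist x c) : ∃ y ∈ sphere c ε, F y ≤ F c := by
  have hd : 0 < dist c x := by rw [dist_comm]; linarith
  have ht : ε / dist c x ∈ Icc (0 : ℝ) 1 :=
    ⟨by positivity, div_le_one_of_le₀ (by rwa [dist_comm]) hd.le⟩
  refine ⟨AffineMap.lineMap c x (ε / dist c x), ?_, ?_⟩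
  · rw [mem_sphere, dist_lineMap_left, Real.norm_of_nonneg ht.1, div_mul_cancel₀ _ hd.ne']
  · exact (hF.le_max_of_mem_segment hc hx (lineMap_mem_segment ℝ c x ht)).trans
      (max_le le_rfl hxc)

variable [FiniteDimensional ℝ E] {ι : Type*} {l : Filter ι} {F : ι → E → ℝ}

theorem exists_eventually_forall_closedBall_le_of_convexOn (hF : ∀ i, ConvexOn ℝ univ (F i))
    (hbdd : ∀ x, ∃ C, ∀ᶠ i in l, F i x ≤ C) (x₀ : E) (r : ℝ) :
    ∃ C, ∀ᶠ i in l, ∀ x ∈ closedBall x₀ r, F i x ≤ C := by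
  obtain ⟨u, hu, -⟩ := (convex_closedBall x₀ r).exists_subset_interior_convexHull_finset_of_isCompact
    (isCompact_closedBall x₀ r) (univ_mem (f := 𝓝ˢ _))
  choose C hC using hbdd
  obtain ⟨B, hB⟩ := (u.finite_toSet.image C).bddAbove
  refine ⟨B, ?_⟩
  filter_upwards [(eventually_all_finset u).2 fun p _ => hC p] with i hi x hx
  obtain ⟨p, hpu, hxp⟩ := (hF i).exists_ge_of_mem_convexHull (subset_univ _)
    (interior_subset (hu hx))
  exact hxp.trans ((hi p hpu).trans (hB (mem_image_of_mem C hpu)))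

theorem le_of_tendsto_of_convexOn [l.NeBot] {G : E → ℝ} (hF : ∀ i, ConvexOn ℝ univ (F i))
    (hFG : ∀ x, Tendsto (fun i => F i x) l (𝓝 (G x))) {y : ι → E} {z : E}
    (hyz : Tendsto y l (𝓝 z)) {a : ι → ℝ} {A : ℝ} (ha : Tendsto a l (𝓝 A))
    (hya : ∀ᶠ i in l, F i (y i) ≤ a i) : G z ≤ A := by
  obtain ⟨C, hC⟩ := exists_eventually_forall_closedBall_le_of_convexOn hF
    (fun x => ⟨G x + 1, (hFG x).eventually (eventually_le_nhds (lt_add_one _))⟩) z 1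
  have hle : ∀ t ∈ Ioc (0 : ℝ) 1, G z ≤ (1 - t) * A + t * C := by
    rintro t ⟨ht₀, ht₁⟩
    have hw : Tendsto (fun i => y i + t⁻¹ • (z - y i)) l (𝓝 z) := by
      simpa using hyz.add ((tendsto_const_nhds (x := z)).sub hyz |>.const_smul t⁻¹)
    refine le_of_tendsto_of_tendsto (hFG z) ((ha.const_mul (1 - t)).add_const (t * C)) ?_
    filter_upwards [hya, hC, hw (closedBall_mem_nhds z one_pos)] with i hai hCi hwi
    have hcomb : (1 - t) • y i + t • (y i + t⁻¹ • (z - y i)) = z := by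
      rw [smul_add, smul_smul, mul_inv_cancel₀ ht₀.ne', one_smul, sub_smul, one_smul]
      abel
    have hconv := (hF i).2 (mem_univ (y i)) (mem_univ (y i + t⁻¹ • (z - y i)))
      (sub_nonneg.2 ht₁) ht₀.le (sub_add_cancel 1 t)
    rw [hcomb] at hconv
    calc F i z ≤ (1 - t) • F i (y i) + t • F i (y i + t⁻¹ • (z - y i)) := hconv
      _ ≤ (1 - t) * a i + t * C := by
          simp only [smul_eq_mul]
          gcongr
          exact hCi _ hwi
  refine ge_of_tendsto (f := fun t : ℝ => (1 - t) * A + t * C) (x := 𝓝[>] 0) ?_ ?_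
  · exact tendsto_nhdsWithin_of_tendsto_nhds ((Continuous.tendsto' (by fun_prop) _ _ (by simp)))
  · filter_upwards [Ioc_mem_nhdsGT one_pos] with t ht
    exact hle t ht

end ConvexLimits

theorem stmt14_general {k : ℕ} (f : ℕ → (Fin k → ℝ) → ℝ) (g : (Fin k → ℝ) → ℝ)
    (hf : ∀ m, ConvexOn ℝ Set.univ (f m))
    (hpt : ∀ x, Tendsto (fun m => f m x) atTop (𝓝 (g x)))
    (xstar : Fin k → ℝ)
    (huniq : ∀ x, x ≠ xstar → g xstar < g x)
    (xm : ℕ → Fin k → ℝ)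
    (hxm : ∀ m (x : Fin k → ℝ), f m (xm m) ≤ f m x) :
    Tendsto xm atTop (𝓝 xstar) := by
  by_contra hnot
  obtain ⟨ε, hε, hfar⟩ : ∃ ε > 0, ∃ᶠ m in atTop, ε ≤ dist (xm m) xstar := by
    simpa only [Metric.tendsto_nhds, not_forall, not_eventually, not_lt, exists_prop] using hnot
  obtain ⟨φ, hφ, hφfar⟩ := extraction_of_frequently_atTop hfar
  choose y hy_sphere hy_le using fun n =>
    (hf (φ n)).exists_mem_sphere_le_of_le (mem_univ _) (mem_univ _) (hxm (φ n) xstar) hε (hφfar n)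
  obtain ⟨z, hz, ψ, hψ, hyz⟩ := (isCompact_sphere xstar ε).tendsto_subseq hy_sphere
  have hφψ := (hφ.comp hψ).tendsto_atTop
  have hgz : g z ≤ g xstar :=
    le_of_tendsto_of_convexOn (fun n => hf (φ (ψ n))) (fun x => (hpt x).comp hφψ) hyz
      ((hpt xstar).comp hφψ) (Eventually.of_forall fun n => hy_le (ψ n))
  exact hgz.not_gt (huniq z (ne_of_mem_sphere hz hε.ne'))

/-- If convex `f_m → f` pointwise on `ℝᵏ`, `f` has a unique minimizer
`x*`, and `x_m` is a minimizer of `f_m` for each `m`, then `x_m → x*`. -/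
theorem stmt14 {k : ℕ} (f : ℕ → (Fin k → ℝ) → ℝ) (g : (Fin k → ℝ) → ℝ)
    (hf : ∀ m, ConvexOn ℝ Set.univ (f m))
    (hg : ConvexOn ℝ Set.univ g)
    (hpt : ∀ x, Tendsto (fun m => f m x) atTop (𝓝 (g x)))
    (xstar : Fin k → ℝ)
    (hmin : ∀ x, g xstar ≤ g x)
    (huniq : ∀ x, x ≠ xstar → g xstar < g x)
    (xm : ℕ → Fin k → ℝ)
    (hxm : ∀ m (x : Fin k → ℝ), f m (xm m) ≤ f m x) :
    Tendsto xm atTop (𝓝 xstar) :=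
  stmt14_general f g hf hpt xstar huniq xm hxm
end

section
/- Let f : ℝ^k → ℝ be a real-valued convex function with a unique minimizer x* ∈ ℝ^k. Then the minimization of f is Tykhonov well-posed: for every sequence (x_m) in ℝ^k with f(x_m) → f(x*), one has x_m → x*. In particular, for every ε > 0 there exists b > 0 such that { x ∈ ℝ^k : f(x) ≤ f(x*) + b } ⊆ { x ∈ ℝ^k : ‖x − x*‖ < ε }. -/
open Filter Topology Metric

/-! A convex function with a unique minimizer `x₀` is, by compactness of spheres, bounded below
on the sphere `‖x - x₀‖ = ε` by some `f x₀ + b` with `b > 0`. Any `x` farther out sees a point of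
that sphere on the segment `[x₀, x]`, and convexity along that segment, together with minimality
of `x₀`, puts `f x` above `f x₀ + b`. -/

section

variable {E : Type*} [NormedAddCommGroup E] [NormedSpace ℝ E]

theorem exists_mem_segment_dist_eq {x y : E} {r : ℝ} (hr₀ : 0 ≤ r) (hr : r ≤ dist y x) :
    ∃ z ∈ segment ℝ x y, dist z x = r :=
  (convex_segment x y).isPreconnected.intermediate_value (left_mem_segment ℝ x y)
    (right_mem_segment ℝ x y) (continuous_id.dist continuous_const).continuousOn
    ⟨by simpa using hr₀, hr⟩

theorem ConvexOn.le_of_mem_segment_of_isMinOn {f : E → ℝ} (hf : ConvexOn ℝ Set.univ f)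
    {x₀ x y : E} (hmin : IsMinOn f Set.univ x₀) (hy : y ∈ segment ℝ x₀ x) : f y ≤ f x :=
  (hf.le_on_segment (Set.mem_univ _) (Set.mem_univ _) hy).trans
    (max_le (hmin (Set.mem_univ x)) le_rfl)

theorem ConvexOn.exists_sublevel_subset_ball [FiniteDimensional ℝ E] {f : E → ℝ}
    (hf : ConvexOn ℝ Set.univ f) {x₀ : E} (huniq : ∀ x, x ≠ x₀ → f x₀ < f x)
    {ε : ℝ} (hε : 0 < ε) : ∃ b > 0, {x | f x ≤ f x₀ + b} ⊆ ball x₀ ε := by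
  have hmin : IsMinOn f Set.univ x₀ := isMinOn_univ_iff.mpr fun x ↦ by
    rcases eq_or_ne x x₀ with rfl | hx
    exacts [le_rfl, (huniq x hx).le]
  have hsphere : ∀ y ∈ sphere x₀ ε, f x₀ < f y := fun y hy ↦
    huniq y (ne_of_mem_sphere hy hε.ne')
  obtain ⟨a, hxa, ha⟩ := (isCompact_sphere x₀ ε).exists_forall_le'
    ((hf.continuousOn isOpen_univ).mono (Set.subset_univ _)) hsphere
  refine ⟨(a - f x₀) / 2, by linarith, fun x (hx : f x ≤ _) ↦ ?_⟩
  by_contra hfar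
  obtain ⟨y, hy, hyx₀⟩ := exists_mem_segment_dist_eq hε.le (not_lt.mp hfar)
  have hyx : f y ≤ f x := hf.le_of_mem_segment_of_isMinOn hmin hy
  have hay : a ≤ f y := ha y hyx₀
  linarith

end

theorem tendsto_of_sublevel_subset_ball {α X : Type*} [PseudoMetricSpace X] {f : X → ℝ}
    {x₀ : X} (hsub : ∀ ε > 0, ∃ b > 0, {x | f x ≤ f x₀ + b} ⊆ ball x₀ ε)
    {l : Filter α} {u : α → X} (hu : Tendsto (fun n ↦ f (u n)) l (𝓝 (f x₀))) :
    Tendsto u l (𝓝 x₀) := by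
  refine Metric.tendsto_nhds.mpr fun ε hε ↦ ?_
  obtain ⟨b, hb, hball⟩ := hsub ε hε
  filter_upwards [hu.eventually_le_const (lt_add_of_pos_right _ hb)] with n hn
  exact hball hn

theorem stmt15_general {k : ℕ} (f : (Fin k → ℝ) → ℝ)
    (hf : ConvexOn ℝ Set.univ f)
    (xstar : Fin k → ℝ)
    (huniq : ∀ x, x ≠ xstar → f xstar < f x) :
    (∀ xm : ℕ → Fin k → ℝ,
      Tendsto (fun m => f (xm m)) atTop (𝓝 (f xstar)) → Tendsto xm atTop (𝓝 xstar)) ∧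
    (∀ ε > (0 : ℝ), ∃ b > (0 : ℝ),
      {x | f x ≤ f xstar + b} ⊆ {x | ‖x - xstar‖ < ε}) := by
  have hsub : ∀ ε > (0 : ℝ), ∃ b > (0 : ℝ), {x | f x ≤ f xstar + b} ⊆ ball xstar ε :=
    fun ε hε ↦ hf.exists_sublevel_subset_ball huniq hε
  refine ⟨fun xm hxm ↦ tendsto_of_sublevel_subset_ball hsub hxm, fun ε hε ↦ ?_⟩
  simpa only [ball, dist_eq_norm] using hsub ε hε

/-- A real-valued convex function on `ℝᵏ` with a unique minimizer `x*` is
Tykhonov well-posed: every sequence `(x_m)` with `f(x_m) → f(x*)` converges to `x*`;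
in particular, for every `ε > 0` some sublevel set `{f ≤ f(x*) + b}`, `b > 0`, is
contained in the `ε`-ball around `x*`. -/
theorem stmt15 {k : ℕ} (f : (Fin k → ℝ) → ℝ)
    (hf : ConvexOn ℝ Set.univ f)
    (xstar : Fin k → ℝ)
    (hmin : ∀ x, f xstar ≤ f x)
    (huniq : ∀ x, x ≠ xstar → f xstar < f x) :
    (∀ xm : ℕ → Fin k → ℝ,
      Tendsto (fun m => f (xm m)) atTop (𝓝 (f xstar)) → Tendsto xm atTop (𝓝 xstar)) ∧
    (∀ ε > (0 : ℝ), ∃ b > (0 : ℝ),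
      {x | f x ≤ f xstar + b} ⊆ {x | ‖x - xstar‖ < ε}) :=
  stmt15_general f hf xstar huniq
end

section
/- Let r_1, …, r_I : ℝ^n → ℝ be strictly convex functions with r_i(0) = 0 for every i, and assume the agents are in a (restricted) Pareto-optimal configuration: Σ_{i=1}^I r_i(b_i) ≥ 0 for all b₁, …, b_I ∈ ℝ^n with Σ_i b_i = 0. Then every partial-equilibrium price-allocation is trivial: if p ∈ ℝ^n and a₁, …, a_I ∈ ℝ^n satisfy Σ_i a_i = 0 and, for every i, a_i minimizes a ↦ r_i(a) + a·p over ℝ^n, then a_i = 0 for every i. -/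
open Filter Topology

/-- If the strictly convex capital requirements `r_i` satisfy `r_i(0) = 0`
and the agents are in a (restricted) Pareto-optimal configuration, then every
partial-equilibrium price-allocation is trivial: `a_i = 0` for all `i`. -/
theorem stmt16 {n I : ℕ} (r : Fin I → (Fin n → ℝ) → ℝ)
    (hconv : ∀ i, StrictConvexOn ℝ Set.univ (r i))
    (hzero : ∀ i, r i 0 = 0)
    (hpareto : ∀ b : Fin I → Fin n → ℝ, ∑ i, b i = (0 : Fin n → ℝ) → 0 ≤ ∑ i, r i (b i))
    (p : Fin n → ℝ) (a : Fin I → Fin n → ℝ)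
    (hsum : ∑ i, a i = (0 : Fin n → ℝ))
    (hminz : ∀ i (x : Fin n → ℝ),
      r i (a i) + ∑ j, a i j * p j ≤ r i x + ∑ j, x j * p j) :
    ∀ i, a i = 0 := by
  set t : Fin I → ℝ := fun i => r i (a i) + ∑ j, a i j * p j with ht
  have hneg : ∀ i, t i ≤ 0 := by
    intro i
    have := hminz i 0
    simpa [hzero i] using this
  have hcancel : ∑ i, ∑ j, a i j * p j = 0 := by
    rw [Finset.sum_comm]
    have : ∀ j, ∑ i, a i j * p j = 0 := by
      intro j
      rw [← Finset.sum_mul]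
      have : ∑ i, a i j = 0 := by
        have := congrFun hsum j
        simpa using this
      rw [this, zero_mul]
    simp [this]
  have hsumt : ∑ i, t i = ∑ i, r i (a i) := by
    simp [ht, Finset.sum_add_distrib, hcancel]
  have hsum0 : ∑ i, t i = 0 := by
    have h1 : (0:ℝ) ≤ ∑ i, t i := hsumt ▸ hpareto a hsum
    have h2 : ∑ i, t i ≤ 0 := Finset.sum_nonpos (fun i _ => hneg i)
    linarith
  have hti : ∀ i, t i = 0 := by
    intro i
    have := (Finset.sum_eq_zero_iff_of_nonpos (fun i _ => hneg i)).1 hsum0 i (Finset.mem_univ i)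
    exact this
  intro i
  by_contra hai
  have hsc := (hconv i).2 (Set.mem_univ (a i)) (Set.mem_univ (0 : Fin n → ℝ)) hai
    (by norm_num : (0:ℝ) < 1/2) (by norm_num : (0:ℝ) < 1/2) (by norm_num)
  simp only [smul_zero, add_zero, hzero i, mul_zero] at hsc
  -- hsc : r i ((1/2) • a i) < (1/2) * r i (a i)
  have hm := hminz i ((1/2 : ℝ) • a i)
  have hlin : ∑ j, ((1/2 : ℝ) • a i) j * p j = (1/2) * ∑ j, a i j * p j := by
    rw [Finset.mul_sum]
    congr 1; ext j; simp [Pi.smul_apply]; ring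
  have h0 : r i (a i) + ∑ j, a i j * p j = 0 := hti i
  rw [hlin] at hm
  rw [smul_eq_mul] at hsc
  linarith
end
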